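/- Let the aIR-IG iterates be as in the setup. Then for every k ≥ 0, every i ∈ {1,…,m}, and every y ∈ X, the single-agent step satisfies ‖x_{k,i+1} − y‖² ≤ ‖x_{k,i} − y‖² + γ_k² ( (C + η_k C_f)/m )² + 2 γ_k η_k ( f_i(y) − f_i(x_{k,i}) ) + 2 γ_k ( φ_i(y) − φ_i(x_{k,i}) ). -/

import Mathlib

/-! The projection onto a convex set does not increase the distance to points of the set, and
expanding `‖(x - γ g) - y‖²` turns the inner product `⟪g, y - x⟫` into the function gaps
`φ_i(y) - φ_i(x) + η (f_i(y) - f_i(x))` by the subgradient inequalities, while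
`‖g‖ ≤ (C + η C_f)/m` bounds the quadratic term. -/

open RealInnerProductSpace

variable {E : Type*} [NormedAddCommGroup E] [InnerProductSpace ℝ E]

theorem sq_norm_sub_le_of_forall_norm_sub_le {K : Set E} (hK : Convex ℝ K) {w p y : E}
    (hp : p ∈ K) (hmin : ∀ u ∈ K, ‖p - w‖ ≤ ‖u - w‖) (hy : y ∈ K) :
    ‖p - y‖ ^ 2 ≤ ‖w - y‖ ^ 2 := by
  have : Nonempty K := ⟨⟨p, hp⟩⟩
  have hbdd : BddBelow (Set.range fun u : K => ‖w - u‖) :=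
    ⟨0, by rintro _ ⟨u, rfl⟩; exact norm_nonneg _⟩
  have hinf : ‖w - p‖ = ⨅ u : K, ‖w - u‖ := by
    refine le_antisymm (le_ciInf fun u => ?_) (ciInf_le hbdd ⟨p, hp⟩)
    rw [norm_sub_rev, norm_sub_rev w]
    exact hmin u u.2
  have hobtuse : ⟪w - p, y - p⟫ ≤ 0 :=
    (norm_eq_iInf_iff_real_inner_le_zero hK hp).mp hinf y hy
  have hexpand := norm_add_sq_real (w - p) (p - y)
  have hflip : ⟪w - p, p - y⟫ = -⟪w - p, y - p⟫ := by rw [← inner_neg_right, neg_sub]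
  rw [sub_add_sub_cancel] at hexpand
  linarith [sq_nonneg ‖w - p‖]

theorem sq_norm_projected_step_sub_le {K : Set E} (hK : Convex ℝ K) {x g p y : E} {t L : ℝ}
    (hp : p ∈ K) (hmin : ∀ u ∈ K, ‖p - (x - t • g)‖ ≤ ‖u - (x - t • g)‖) (hy : y ∈ K)
    (hg : ‖g‖ ≤ L) :
    ‖p - y‖ ^ 2 ≤ ‖x - y‖ ^ 2 + t ^ 2 * L ^ 2 + 2 * t * ⟪g, y - x⟫ := by
  have hexpand : ‖x - t • g - y‖ ^ 2 = ‖x - y‖ ^ 2 + t ^ 2 * ‖g‖ ^ 2 + 2 * t * ⟪g, y - x⟫ := by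
    rw [sub_right_comm, norm_sub_sq_real, real_inner_smul_right, norm_smul, Real.norm_eq_abs,
      mul_pow, sq_abs, real_inner_comm, ← neg_sub y x, inner_neg_right]
    ring
  have hL : t ^ 2 * ‖g‖ ^ 2 ≤ t ^ 2 * L ^ 2 := by gcongr
  linarith [sq_norm_sub_le_of_forall_norm_sub_le hK hp hmin hy]

theorem stmt8_general
    {n : ℕ} (m : ℕ)
    (X : Set (EuclideanSpace ℝ (Fin n)))
    (hXconv : Convex ℝ X)
    (f φ : ℕ → EuclideanSpace ℝ (Fin n) → ℝ)
    (C Cf : ℝ)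
    (γ η : ℕ → ℝ)
    (hγpos : ∀ k, 0 < γ k) (hηpos : ∀ k, 0 < η k)
    (proj : EuclideanSpace ℝ (Fin n) → EuclideanSpace ℝ (Fin n))
    (hproj_mem : ∀ w, proj w ∈ X)
    (hproj_min : ∀ w, ∀ u ∈ X, ‖proj w - w‖ ≤ ‖u - w‖)
    (z gφ gf : ℕ → ℕ → EuclideanSpace ℝ (Fin n))
    (hzstep : ∀ k, ∀ i ∈ Finset.Icc 1 m,
      z k (i + 1) = proj (z k i - γ k • (gφ k i + η k • gf k i)))
    (hgφ_sub : ∀ k, ∀ i ∈ Finset.Icc 1 m, ∀ w,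
      φ i (z k i) + (inner ℝ (gφ k i) (w - z k i) : ℝ) ≤ φ i w)
    (hgφ_bnd : ∀ k, ∀ i ∈ Finset.Icc 1 m, ‖gφ k i‖ ≤ C / m)
    (hgf_sub : ∀ k, ∀ i ∈ Finset.Icc 1 m, ∀ w,
      f i (z k i) + (inner ℝ (gf k i) (w - z k i) : ℝ) ≤ f i w)
    (hgf_bnd : ∀ k, ∀ i ∈ Finset.Icc 1 m, ‖gf k i‖ ≤ Cf / m)
    (k : ℕ) (i : ℕ) (hi1 : 1 ≤ i) (him : i ≤ m) (y : EuclideanSpace ℝ (Fin n)) (hy : y ∈ X) :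
    ‖z k (i + 1) - y‖ ^ 2
    ≤ ‖z k i - y‖ ^ 2 + γ k ^ 2 * ((C + η k * Cf) / (m : ℝ)) ^ 2 +
        2 * γ k * η k * (f i y - f i (z k i)) +
        2 * γ k * (φ i y - φ i (z k i)) := by
  have hi : i ∈ Finset.Icc 1 m := Finset.mem_Icc.mpr ⟨hi1, him⟩
  have hη := (hηpos k).le
  have hg : ‖gφ k i + η k • gf k i‖ ≤ (C + η k * Cf) / m := by
    calc ‖gφ k i + η k • gf k i‖ ≤ ‖gφ k i‖ + ‖η k • gf k i‖ := norm_add_le _ _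
      _ = ‖gφ k i‖ + η k * ‖gf k i‖ := by rw [norm_smul, Real.norm_of_nonneg hη]
      _ ≤ C / m + η k * (Cf / m) := by
          gcongr
          exacts [hgφ_bnd k i hi, hgf_bnd k i hi]
      _ = (C + η k * Cf) / m := by ring
  have hstep := sq_norm_projected_step_sub_le (x := z k i) (t := γ k) hXconv (hproj_mem _)
    (hproj_min _) hy hg
  rw [← hzstep k i hi, inner_add_left, real_inner_smul_left] at hstep
  have hφ := hgφ_sub k i hi y
  have hf := mul_le_mul_of_nonneg_left (hgf_sub k i hi y) hη
  nlinarith [hγpos k]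

theorem stmt8
    {n : ℕ} (m : ℕ) (hm : 1 ≤ m)
    (X : Set (EuclideanSpace ℝ (Fin n)))
    (hXne : X.Nonempty) (hXcmp : IsCompact X) (hXconv : Convex ℝ X)
    (f φ : ℕ → EuclideanSpace ℝ (Fin n) → ℝ)
    (hfconv : ∀ i ∈ Finset.Icc 1 m, ConvexOn ℝ Set.univ (f i))
    (hφconv : ∀ i ∈ Finset.Icc 1 m, ConvexOn ℝ Set.univ (φ i))
    (C Cf : ℝ) (hC : 0 < C) (hCf : 0 < Cf)
    (γ η : ℕ → ℝ)
    (hγpos : ∀ k, 0 < γ k) (hηpos : ∀ k, 0 < η k)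
    (hγdec : ∀ k, γ (k + 1) ≤ γ k) (hηdec : ∀ k, η (k + 1) ≤ η k)
    (proj : EuclideanSpace ℝ (Fin n) → EuclideanSpace ℝ (Fin n))
    (hproj_mem : ∀ w, proj w ∈ X)
    (hproj_min : ∀ w, ∀ u ∈ X, ‖proj w - w‖ ≤ ‖u - w‖)
    (x : ℕ → EuclideanSpace ℝ (Fin n))
    (z gφ gf : ℕ → ℕ → EuclideanSpace ℝ (Fin n))
    (hx0 : x 0 ∈ X)
    (hz1 : ∀ k, z k 1 = x k)
    (hzstep : ∀ k, ∀ i ∈ Finset.Icc 1 m,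
      z k (i + 1) = proj (z k i - γ k • (gφ k i + η k • gf k i)))
    (hxnext : ∀ k, x (k + 1) = z k (m + 1))
    (hgφ_sub : ∀ k, ∀ i ∈ Finset.Icc 1 m, ∀ w,
      φ i (z k i) + (inner ℝ (gφ k i) (w - z k i) : ℝ) ≤ φ i w)
    (hgφ_bnd : ∀ k, ∀ i ∈ Finset.Icc 1 m, ‖gφ k i‖ ≤ C / m)
    (hgf_sub : ∀ k, ∀ i ∈ Finset.Icc 1 m, ∀ w,
      f i (z k i) + (inner ℝ (gf k i) (w - z k i) : ℝ) ≤ f i w)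
    (hgf_bnd : ∀ k, ∀ i ∈ Finset.Icc 1 m, ‖gf k i‖ ≤ Cf / m)
    (k : ℕ) (i : ℕ) (hi1 : 1 ≤ i) (him : i ≤ m) (y : EuclideanSpace ℝ (Fin n)) (hy : y ∈ X) :
    ‖z k (i + 1) - y‖ ^ 2
    ≤ ‖z k i - y‖ ^ 2 + γ k ^ 2 * ((C + η k * Cf) / (m : ℝ)) ^ 2 +
        2 * γ k * η k * (f i y - f i (z k i)) +
        2 * γ k * (φ i y - φ i (z k i)) :=
  stmt8_general m X hXconv f φ C Cf γ η hγpos hηpos proj hproj_mem hproj_min z gφ gf hzstep hgφ_sub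
    hgφ_bnd hgf_sub hgf_bnd k i hi1 him y hy
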